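/- arXiv:2302.14271 — 5 statements merged into one kernel-verified Lean document; each statement's English description precedes it below -/
import Mathlib

section
/- For all real a > 0 and t, t' ≥ 0, ∫_0^{min(t,t')} (1 - cos((t-r)a))(1 - cos((t'-r)a)) dr = min(t,t') · (1 + (1/2) cos((t-t')a)) + (1/(4a)) ( sin((t+t')a) - 4 sin(t a) - 4 sin(t' a) + 3 sin(|t-t'| a) ). -/
open Real

lemma A0_key (a t t' : ℝ) (ha : 0 < a) (h : t' ≤ t) :
    ∫ r in (0:ℝ)..t',
        (1 - Real.cos ((t - r) * a)) * (1 - Real.cos ((t' - r) * a))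
      = t' * (1 + (1/2) * Real.cos ((t - t') * a))
        + (1/(4*a)) * (Real.sin ((t + t') * a) - 4 * Real.sin (t * a)
            - 4 * Real.sin (t' * a) + 3 * Real.sin ((t - t') * a)) := by
  have hane : a ≠ 0 := ne_of_gt ha
  set F : ℝ → ℝ := fun r => r + Real.sin ((t - r) * a) / a + Real.sin ((t' - r) * a) / a
      + r / 2 * Real.cos ((t - t') * a) - Real.sin ((t + t' - 2 * r) * a) / (4 * a) with hF
  have hderiv : ∀ r ∈ Set.uIcc (0:ℝ) t', HasDerivAt F
      ((1 - Real.cos ((t - r) * a)) * (1 - Real.cos ((t' - r) * a))) r := by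
    intro r _
    have h1 : HasDerivAt (fun r : ℝ => Real.sin ((t - r) * a) / a)
        (-Real.cos ((t - r) * a)) r := by
      have := ((((hasDerivAt_id r).const_sub t).mul_const a).sin).div_const a
      refine this.congr_deriv ?_
      field_simp
      simp [id, mul_comm]
    have h2 : HasDerivAt (fun r : ℝ => Real.sin ((t' - r) * a) / a)
        (-Real.cos ((t' - r) * a)) r := by
      have := ((((hasDerivAt_id r).const_sub t').mul_const a).sin).div_const a
      refine this.congr_deriv ?_
      field_simp
      simp [id, mul_comm]
    have h3 : HasDerivAt (fun r : ℝ => r / 2 * Real.cos ((t - t') * a))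
        (Real.cos ((t - t') * a) / 2) r := by
      have := ((hasDerivAt_id r).div_const 2).mul_const (Real.cos ((t - t') * a))
      refine this.congr_deriv ?_
      ring
    have h4 : HasDerivAt (fun r : ℝ => Real.sin ((t + t' - 2 * r) * a) / (4 * a))
        (-(Real.cos ((t + t' - 2 * r) * a) / 2)) r := by
      have hi : HasDerivAt (fun r : ℝ => (t + t' - 2 * r) * a) (-2 * a) r := by
        have := ((hasDerivAt_id r).const_mul 2).const_sub (t + t')
        refine (this.mul_const a).congr_deriv ?_
        ring
      have := (hi.sin).div_const (4 * a)
      refine this.congr_deriv ?_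
      field_simp
      ring
    have := ((((hasDerivAt_id r).add h1).add h2).add h3).sub h4
    refine this.congr_deriv ?_
    have hcc : Real.cos ((t - r) * a) * Real.cos ((t' - r) * a)
        = (Real.cos ((t - t') * a) + Real.cos ((t + t' - 2 * r) * a)) / 2 := by
      have e1 := Real.cos_add ((t - r) * a) ((t' - r) * a)
      have e2 := Real.cos_sub ((t - r) * a) ((t' - r) * a)
      have : (t - r) * a - (t' - r) * a = (t - t') * a := by ring
      rw [this] at e2
      have : (t - r) * a + (t' - r) * a = (t + t' - 2 * r) * a := by ring
      rw [this] at e1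
      linarith
    linear_combination -hcc
  have hcont : IntervalIntegrable
      (fun r => (1 - Real.cos ((t - r) * a)) * (1 - Real.cos ((t' - r) * a)))
      MeasureTheory.volume 0 t' := by
    apply Continuous.intervalIntegrable
    continuity
  have := intervalIntegral.integral_eq_sub_of_hasDerivAt hderiv hcont
  rw [this]
  simp only [hF]
  have e1 : t' - t' = 0 := by ring
  have e2 : t + t' - 2 * t' = t - t' := by ring
  rw [e1, e2]
  simp
  field_simp
  ring

/-- Deterministic trigonometric integral computing the covariance of the
time-component `A^0` of the vector potential: for `a > 0` and `t, t' ≥ 0`,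
`∫_0^{t∧t'} (1 - cos((t-r)a))(1 - cos((t'-r)a)) dr
  = (t∧t')(1 + (1/2)cos((t-t')a))
    + (1/(4a))(sin((t+t')a) - 4 sin(ta) - 4 sin(t'a) + 3 sin(|t-t'|a))`,
with the signs arising from the direct computation. -/
theorem A0_covariance_integral_identity (a t t' : ℝ) (ha : 0 < a)
    (ht : 0 ≤ t) (ht' : 0 ≤ t') :
    ∫ r in (0:ℝ)..(min t t'),
        (1 - Real.cos ((t - r) * a)) * (1 - Real.cos ((t' - r) * a))
      = min t t' * (1 + (1/2) * Real.cos ((t - t') * a))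
        + (1/(4*a)) * (Real.sin ((t + t') * a) - 4 * Real.sin (t * a)
            - 4 * Real.sin (t' * a) + 3 * Real.sin (|t - t'| * a)) := by
  rcases le_total t' t with h | h
  · rw [min_eq_right h, abs_of_nonneg (by linarith)]
    exact A0_key a t t' ha h
  · rw [min_eq_left h, abs_of_nonpos (by linarith)]
    have := A0_key a t' t ha h
    have hsym : ∀ r, (1 - Real.cos ((t - r) * a)) * (1 - Real.cos ((t' - r) * a))
        = (1 - Real.cos ((t' - r) * a)) * (1 - Real.cos ((t - r) * a)) := fun r => by ring
    simp only [hsym]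
    rw [this]
    rw [show t' + t = t + t' by ring, show t' - t = -(t - t') by ring]
    simp only [neg_mul, Real.cos_neg, Real.sin_neg]
    ring
end

section
/- Logarithmic divergence of the null-form sum: for every m ∈ ℤ² \ {0} there exists c > 0 such that for all N ≥ 2, Σ_{k ∈ ℤ², k ≠ 0, k ≠ ±m, ‖k‖ ≤ N, ‖k+m‖ ≤ N} (k₁ m₂ - k₂ m₁)² / (‖k‖² ‖k+m‖²) ≥ c log N - 1/c. -/
/-!
Write `k = a m + b m⊥` with `m⊥ = (-m₂, m₁)`. Then `k₁m₂ - k₂m₁ = -b ‖m‖²`,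
`‖k‖² = (a² + b²) ‖m‖²` and `‖k + m‖² = ((a + 1)² + b²) ‖m‖²`, so the summand is
`b² / ((a² + b²)((a + 1)² + b²))`, which is at least `1 / (10 b²)` in the cone `|a| ≤ b`.
The `2b + 1` points of row `b` of the cone contribute at least `1 / (5b)`, and the rows
`1 ≤ b ≤ B = ⌊N / (3‖m‖)⌋` lie in the range of summation, so the sum is at least
`H_B / 5 ≥ log (B + 1) / 5 ≥ (log N - log (3‖m‖)) / 5`.
-/

noncomputable def znorm (k : ℤ × ℤ) : ℝ :=
  Real.sqrt ((k.1 : ℝ)^2 + (k.2 : ℝ)^2)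

open Finset Real

lemma exists_pos_mul_log_sub_inv_le {F : ℕ → ℝ} {a A : ℝ} (ha : 0 < a)
    (h : ∀ N : ℕ, 2 ≤ N → a * log N - A ≤ F N) :
    ∃ c > (0 : ℝ), ∀ N : ℕ, 2 ≤ N → c * log N - 1 / c ≤ F N := by
  refine ⟨min a (|A| + 1)⁻¹, by positivity, fun N hN => ?_⟩
  have h₁ : min a (|A| + 1)⁻¹ * log N ≤ a * log N :=
    mul_le_mul_of_nonneg_right (min_le_left _ _) (log_natCast_nonneg N)
  have h₂ : A ≤ 1 / min a (|A| + 1)⁻¹ :=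
    calc A ≤ 1 / (|A| + 1)⁻¹ := by rw [one_div, inv_inv]; linarith [le_abs_self A]
      _ ≤ _ := one_div_le_one_div_of_le (by positivity) (min_le_right _ _)
  linarith [h N hN]

lemma sum_comp_le_tsum_subtype {α β : Type*} {s : Set α} (hs : s.Finite) {f : α → ℝ}
    (hf : ∀ a ∈ s, 0 ≤ f a) {T : Finset β} {g : β → α} (hg : Set.MapsTo g T s)
    (hinj : Set.InjOn g T) : ∑ x ∈ T, f (g x) ≤ ∑' a : s, f a := by
  have := hs.to_subtype
  rw [← Finset.tsum_subtype]
  exact tsum_comp_le_tsum_of_inj (f := fun a : s => f a) (.of_finite) (fun a => hf a a.2)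
    ((hg.restrict_inj).2 hinj)

namespace NullForm

def perp (m : ℤ × ℤ) : ℤ × ℤ := (-m.2, m.1)

def cross (k m : ℤ × ℤ) : ℤ := k.1 * m.2 - k.2 * m.1

noncomputable def nullForm (m k : ℤ × ℤ) : ℝ :=
  (cross k m : ℝ) ^ 2 / (znorm k ^ 2 * znorm (k + m) ^ 2)

def nullFormSupport (m : ℤ × ℤ) (r : ℝ) : Set (ℤ × ℤ) :=
  {k | k ≠ 0 ∧ k ≠ m ∧ k ≠ -m ∧ znorm k ≤ r ∧ znorm (k + m) ≤ r}

lemma znorm_sq (k : ℤ × ℤ) : znorm k ^ 2 = (k.1 : ℝ) ^ 2 + (k.2 : ℝ) ^ 2 :=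
  Real.sq_sqrt (by positivity)

lemma norm_le_znorm (k : ℤ × ℤ) : ‖k‖ ≤ znorm k := by
  rw [Prod.norm_def, Int.norm_eq_abs, Int.norm_eq_abs]
  exact max_le (Real.abs_le_sqrt (by nlinarith)) (Real.abs_le_sqrt (by nlinarith))

lemma finite_setOf_znorm_le (r : ℝ) : {k : ℤ × ℤ | znorm k ≤ r}.Finite :=
  (isCompact_closedBall (0 : ℤ × ℤ) r).finite_of_discrete.subset fun k hk =>
    mem_closedBall_zero_iff.2 ((norm_le_znorm k).trans hk)

lemma sq_add_sq_pos {m : ℤ × ℤ} (hm : m ≠ 0) : 0 < m.1 ^ 2 + m.2 ^ 2 := by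
  by_contra! h
  have h₁ : m.1 ^ 2 = 0 := by linarith [sq_nonneg m.1, sq_nonneg m.2]
  have h₂ : m.2 ^ 2 = 0 := by linarith [sq_nonneg m.1, sq_nonneg m.2]
  exact hm (Prod.ext (pow_eq_zero_iff two_ne_zero |>.1 h₁) (pow_eq_zero_iff two_ne_zero |>.1 h₂))

lemma znorm_pos {m : ℤ × ℤ} (hm : m ≠ 0) : 0 < znorm m :=
  Real.sqrt_pos.2 (by exact_mod_cast sq_add_sq_pos hm)

lemma znorm_le_of_sq_le {k : ℤ × ℤ} {r : ℝ} (hr : 0 ≤ r) (h : znorm k ^ 2 ≤ r ^ 2) :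
    znorm k ≤ r :=
  (pow_le_pow_iff_left₀ (Real.sqrt_nonneg _) hr two_ne_zero).1 h

lemma ne_zero_and_ne_and_ne_neg_of_cross_ne_zero {k m : ℤ × ℤ} (h : cross k m ≠ 0) :
    k ≠ 0 ∧ k ≠ m ∧ k ≠ -m := by
  refine ⟨?_, ?_, ?_⟩ <;> rintro rfl <;> apply h <;> simp [cross] <;> ring

lemma cross_smul_add_smul_perp (a b : ℤ) (m : ℤ × ℤ) :
    cross (a • m + b • perp m) m = -b * (m.1 ^ 2 + m.2 ^ 2) := by
  simp only [cross, perp, Prod.fst_add, Prod.snd_add, Prod.smul_fst, Prod.smul_snd, smul_eq_mul]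
  ring

lemma znorm_sq_smul_add_smul_perp (a b : ℤ) (m : ℤ × ℤ) :
    znorm (a • m + b • perp m) ^ 2 = ((a : ℝ) ^ 2 + b ^ 2) * znorm m ^ 2 := by
  simp only [znorm_sq, perp, Prod.fst_add, Prod.snd_add, Prod.smul_fst, Prod.smul_snd,
    smul_eq_mul]
  push_cast
  ring

lemma smul_add_smul_perp_add_self (a b : ℤ) (m : ℤ × ℤ) :
    a • m + b • perp m + m = (a + 1) • m + b • perp m := by
  module

lemma smul_add_smul_perp_injective {m : ℤ × ℤ} (hm : m ≠ 0) :
    Function.Injective fun p : ℤ × ℤ => p.1 • m + p.2 • perp m := by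
  rintro ⟨a, b⟩ ⟨a', b'⟩ h
  have hb : b = b' := by
    have := congrArg (cross · m) h
    simp only [cross_smul_add_smul_perp] at this
    exact neg_inj.1 (mul_right_cancel₀ (sq_add_sq_pos hm).ne' this)
  subst hb
  exact Prod.ext (smul_left_injective ℤ hm (add_right_cancel h)) rfl

lemma nullForm_smul_add_smul_perp {m : ℤ × ℤ} (hm : m ≠ 0) (a b : ℤ) :
    nullForm m (a • m + b • perp m) = (b : ℝ) ^ 2 / ((a ^ 2 + b ^ 2) * ((a + 1) ^ 2 + b ^ 2)) := by
  have hM := (znorm_pos hm).ne'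
  rw [nullForm, smul_add_smul_perp_add_self, znorm_sq_smul_add_smul_perp,
    znorm_sq_smul_add_smul_perp, cross_smul_add_smul_perp]
  push_cast
  rw [← znorm_sq]
  field_simp

lemma inv_ten_mul_sq_le (a b : ℝ) (hb : 1 ≤ b) (ha : |a| ≤ b) :
    1 / (10 * b ^ 2) ≤ b ^ 2 / ((a ^ 2 + b ^ 2) * ((a + 1) ^ 2 + b ^ 2)) := by
  obtain ⟨ha₁, ha₂⟩ := abs_le.1 ha
  have h₁ : a ^ 2 + b ^ 2 ≤ 2 * b ^ 2 := by nlinarith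
  have h₂ : (a + 1) ^ 2 + b ^ 2 ≤ 5 * b ^ 2 := by nlinarith
  rw [div_le_div_iff₀ (by positivity) (by positivity)]
  nlinarith [mul_le_mul h₁ h₂ (by positivity) (by positivity)]

lemma inv_div_five_le_sum_nullForm {m : ℤ × ℤ} (hm : m ≠ 0) {b : ℕ} (hb : 1 ≤ b) :
    (b : ℝ)⁻¹ / 5 ≤ ∑ a ∈ Icc (-(b : ℤ)) b, nullForm m (a • m + (b : ℤ) • perp m) := by
  have hbR : (1 : ℝ) ≤ b := by exact_mod_cast hb
  calc (b : ℝ)⁻¹ / 5 ≤ (2 * b + 1) * (1 / (10 * (b : ℝ) ^ 2)) := by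
        rw [div_le_iff₀ (by norm_num)]
        field_simp
        nlinarith
    _ = ∑ a ∈ Icc (-(b : ℤ)) b, 1 / (10 * (b : ℝ) ^ 2) := by
        rw [sum_const, Int.card_Icc, nsmul_eq_mul]
        congr 1
        rw [show (b : ℤ) + 1 - -b = ((2 * b + 1 : ℕ) : ℤ) by push_cast; ring, Int.toNat_natCast]
        push_cast
        ring
    _ ≤ _ := sum_le_sum fun a ha => by
        obtain ⟨ha₁, ha₂⟩ := mem_Icc.1 ha
        have haR : |(a : ℝ)| ≤ b := abs_le.2 ⟨by exact_mod_cast ha₁, by exact_mod_cast ha₂⟩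
        rw [nullForm_smul_add_smul_perp hm]
        exact_mod_cast inv_ten_mul_sq_le a b hbR haR

lemma harmonic_div_five_le_sum_nullForm {m : ℤ × ℤ} (hm : m ≠ 0) (B : ℕ) :
    (harmonic B : ℝ) / 5 ≤ ∑ x ∈ (Icc 1 B).sigma (fun b => Icc (-(b : ℤ)) b),
      nullForm m (x.2 • m + (x.1 : ℤ) • perp m) := by
  rw [sum_sigma, harmonic_eq_sum_Icc, Rat.cast_sum, sum_div]
  exact sum_le_sum fun b hb => by
    simpa using inv_div_five_le_sum_nullForm hm (mem_Icc.1 hb).1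

lemma smul_add_smul_perp_mem_nullFormSupport {m : ℤ × ℤ} (hm : m ≠ 0) {a b : ℤ} {r : ℝ}
    (hb : 1 ≤ b) (ha : |a| ≤ b) (hr : 3 * b * znorm m ≤ r) :
    a • m + b • perp m ∈ nullFormSupport m r := by
  have hcross : cross (a • m + b • perp m) m ≠ 0 := by
    rw [cross_smul_add_smul_perp]
    exact mul_ne_zero (by omega) (sq_add_sq_pos hm).ne'
  have hM := znorm_pos hm
  have hbR : (1 : ℝ) ≤ b := by exact_mod_cast hb
  have hab : (a : ℝ) ^ 2 ≤ (b : ℝ) ^ 2 :=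
    sq_le_sq.2 (by rw [abs_of_pos (by linarith : (0 : ℝ) < b)]; exact_mod_cast ha)
  have hr₀ : 0 ≤ r := le_trans (by positivity) hr
  have hr₂ : (3 * b * znorm m) ^ 2 ≤ r ^ 2 := pow_le_pow_left₀ (by positivity) hr 2
  obtain ⟨h₀, hm₁, hm₂⟩ := ne_zero_and_ne_and_ne_neg_of_cross_ne_zero hcross
  refine ⟨h₀, hm₁, hm₂, znorm_le_of_sq_le hr₀ ?_, znorm_le_of_sq_le hr₀ ?_⟩
  · rw [znorm_sq_smul_add_smul_perp]
    nlinarith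
  · rw [smul_add_smul_perp_add_self, znorm_sq_smul_add_smul_perp]
    have ha₁ : ((a + 1 : ℤ) : ℝ) ^ 2 ≤ 4 * (b : ℝ) ^ 2 := by
      obtain ⟨h₁, h₂⟩ := abs_le.1 ha
      have : (-b : ℝ) ≤ a := by exact_mod_cast h₁
      have : (a : ℝ) ≤ b := by exact_mod_cast h₂
      push_cast
      nlinarith
    nlinarith

lemma log_sub_log_div_five_le_tsum_nullForm {m : ℤ × ℤ} (hm : m ≠ 0) {N : ℕ} (hN : 1 ≤ N) :
    (log N - log (3 * znorm m)) / 5 ≤ ∑' k : nullFormSupport m N, nullForm m k := by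
  have hM := znorm_pos hm
  have hN₀ : (0 : ℝ) < N := by exact_mod_cast hN
  set B := ⌊(N : ℝ) / (3 * znorm m)⌋₊
  have hB : 3 * B * znorm m ≤ N := by
    have := Nat.floor_le (a := (N : ℝ) / (3 * znorm m)) (by positivity)
    rw [le_div_iff₀ (by positivity)] at this
    linarith
  have hsupp : (nullFormSupport m N).Finite :=
    (finite_setOf_znorm_le N).subset fun k hk => hk.2.2.2.1
  calc (log N - log (3 * znorm m)) / 5 = log (N / (3 * znorm m)) / 5 := by
        rw [log_div hN₀.ne' (by positivity)]
    _ ≤ log ↑(B + 1) / 5 := by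
        gcongr
        push_cast
        exact (Nat.lt_floor_add_one _).le
    _ ≤ harmonic B / 5 := by
        gcongr
        exact log_add_one_le_harmonic B
    _ ≤ ∑ x ∈ (Icc 1 B).sigma (fun b => Icc (-(b : ℤ)) b),
          nullForm m (x.2 • m + (x.1 : ℤ) • perp m) := harmonic_div_five_le_sum_nullForm hm B
    _ ≤ _ := by
        refine sum_comp_le_tsum_subtype hsupp (fun k _ => by unfold nullForm; positivity)
          (fun x hx => ?_) ?_
        · rw [mem_coe, mem_sigma, mem_Icc, mem_Icc] at hx
          refine smul_add_smul_perp_mem_nullFormSupport hm (by exact_mod_cast hx.1.1)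
            (abs_le.2 hx.2) (le_trans ?_ hB)
          have : (x.1 : ℝ) ≤ B := by exact_mod_cast hx.1.2
          push_cast
          gcongr
        · rintro ⟨b, a⟩ - ⟨b', a'⟩ - h
          obtain ⟨rfl, hb⟩ := Prod.ext_iff.1 (smul_add_smul_perp_injective hm (a₁ := (a, b))
            (a₂ := (a', b')) h)
          rw [Nat.cast_inj.1 hb]

end NullForm

/-- Logarithmic divergence of the null-form sum: for every `m ∈ ℤ² \ {0}` there
is `c > 0` such that for all `N ≥ 2`,
`Σ_{k ≠ 0, ±m, ‖k‖ ≤ N, ‖k+m‖ ≤ N} (k₁m₂ - k₂m₁)² / (‖k‖² ‖k+m‖²) ≥ c log N - 1/c`. -/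
theorem nullform_sum_log_divergence (m : ℤ × ℤ) (hm : m ≠ 0) :
    ∃ c > (0:ℝ), ∀ N : ℕ, 2 ≤ N →
      c * Real.log N - 1/c ≤
        ∑' k : {k : ℤ × ℤ // k ≠ 0 ∧ k ≠ m ∧ k ≠ -m ∧ znorm k ≤ N ∧ znorm (k + m) ≤ N},
          ((k.1.1 * m.2 - k.1.2 * m.1 : ℤ) : ℝ)^2
            / (znorm k.1 ^ 2 * znorm (k.1 + m) ^ 2) :=
  exists_pos_mul_log_sub_inv_le
    (F := fun N : ℕ => ∑' k : NullForm.nullFormSupport m N, NullForm.nullForm m k)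
    (a := 1 / 5) (A := log (3 * znorm m) / 5) (by norm_num) fun N hN => by
      have := NullForm.log_sub_log_div_five_le_tsum_nullForm hm (N := N) (by omega)
      linarith
end

section
/- Leray projection null-form identity on the torus: for smooth φ : 𝕋² → ℂ and j ∈ {1,2}, the j-th component of the Leray projection of Im(φ ∇φ̄) equals its spatial mean minus Δ^{-1} ∂^k Im(Q_{jk}(φ, φ̄)): 𝒫 Im(φ ∇̄φ)_j = (2π)^{-2} ∫_{𝕋²} Im(φ ∂_j φ̄) dx − Δ^{-1} Σ_k ∂_k Im(Q_{jk}(φ, φ̄)). -/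
open MeasureTheory Real

/-- The partial derivative `∂_i f x` on `ℝ²`, with values in a real normed space. -/
noncomputable def pd {E : Type*} [NormedAddCommGroup E] [NormedSpace ℝ E]
    (i : Fin 2) (f : (Fin 2 → ℝ) → E) (x : Fin 2 → ℝ) : E :=
  fderiv ℝ f x (Pi.single i 1)

/-- The Laplacian on `ℝ²`. -/
noncomputable def lap (f : (Fin 2 → ℝ) → ℝ) (x : Fin 2 → ℝ) : ℝ :=
  ∑ i : Fin 2, pd i (fun y => pd i f y) x

section helpers

variable {E F : Type*} [NormedAddCommGroup E] [NormedSpace ℝ E]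
  [NormedAddCommGroup F] [NormedSpace ℝ F]

lemma my_pd_contDiff {f : (Fin 2 → ℝ) → E} (hf : ContDiff ℝ (⊤ : ℕ∞) f) (i : Fin 2) :
    ContDiff ℝ (⊤ : ℕ∞) (pd i f) :=
  (hf.fderiv_right (by simp)).clm_apply contDiff_const

lemma my_pd_add {f g : (Fin 2 → ℝ) → E} {x} (hf : DifferentiableAt ℝ f x)
    (hg : DifferentiableAt ℝ g x) (i : Fin 2) :
    pd i (fun y => f y + g y) x = pd i f x + pd i g x := by
  unfold pd; rw [fderiv_fun_add hf hg]; rfl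

lemma my_pd_sub {f g : (Fin 2 → ℝ) → E} {x} (hf : DifferentiableAt ℝ f x)
    (hg : DifferentiableAt ℝ g x) (i : Fin 2) :
    pd i (fun y => f y - g y) x = pd i f x - pd i g x := by
  unfold pd; rw [fderiv_fun_sub hf hg]; rfl

lemma my_pd_neg {f : (Fin 2 → ℝ) → E} {x} (i : Fin 2) :
    pd i (fun y => -(f y)) x = -(pd i f x) := by
  unfold pd; rw [fderiv_fun_neg]; rfl

lemma my_pd_const (c : E) (x : Fin 2 → ℝ) (i : Fin 2) :
    pd i (fun _ => c) x = 0 := by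
  unfold pd; rw [fderiv_fun_const]; rfl

lemma my_pd_sum {ι : Type*} (s : Finset ι) {f : ι → (Fin 2 → ℝ) → E} {x}
    (hf : ∀ k ∈ s, DifferentiableAt ℝ (f k) x) (i : Fin 2) :
    pd i (fun y => ∑ k ∈ s, f k y) x = ∑ k ∈ s, pd i (f k) x := by
  unfold pd; rw [fderiv_fun_sum hf]; simp

lemma my_pd_clm (A : E →L[ℝ] F) {f : (Fin 2 → ℝ) → E} {x}
    (hf : DifferentiableAt ℝ f x) (i : Fin 2) :
    pd i (fun y => A (f y)) x = A (pd i f x) := by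
  unfold pd
  rw [show (fun y => A (f y)) = A ∘ f from rfl, fderiv_comp x A.differentiableAt hf,
    A.fderiv]
  rfl

lemma my_pd_mul {A : Type*} [NormedCommRing A] [NormedAlgebra ℝ A]
    {f g : (Fin 2 → ℝ) → A} {x} (hf : DifferentiableAt ℝ f x)
    (hg : DifferentiableAt ℝ g x) (i : Fin 2) :
    pd i (fun y => f y * g y) x = pd i f x * g x + f x * pd i g x := by
  unfold pd
  rw [fderiv_fun_mul hf hg]
  simp [smul_eq_mul]
  ring

lemma my_pd_conj {f : (Fin 2 → ℝ) → ℂ} {x} (hf : DifferentiableAt ℝ f x) (i : Fin 2) :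
    pd i (fun y => (starRingEnd ℂ) (f y)) x = (starRingEnd ℂ) (pd i f x) := by
  have := my_pd_clm (Complex.conjCLE : ℂ ≃L[ℝ] ℂ).toContinuousLinearMap hf i
  simpa using this

lemma my_pd_im {f : (Fin 2 → ℝ) → ℂ} {x} (hf : DifferentiableAt ℝ f x) (i : Fin 2) :
    pd i (fun y => (f y).im) x = (pd i f x).im :=
  my_pd_clm Complex.imCLM hf i

lemma my_pd_comm {f : (Fin 2 → ℝ) → E} (hf : ContDiff ℝ (⊤ : ℕ∞) f) (a b : Fin 2) (x : Fin 2 → ℝ) :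
    pd a (pd b f) x = pd b (pd a f) x := by
  have hsymm : IsSymmSndFDerivAt ℝ f x := hf.contDiffAt.isSymmSndFDerivAt (by rw [minSmoothness_of_isRCLikeNormedField]; exact WithTop.coe_le_coe.mpr (le_top : (2 : ℕ∞) ≤ ⊤))
  have hd : DifferentiableAt ℝ (fderiv ℝ f) x :=
    ((hf.fderiv_right (m := (⊤ : ℕ∞)) (by simp)).differentiable (by simp)).differentiableAt
  have key : ∀ c d : Fin 2, pd c (pd d f) x =
      fderiv ℝ (fderiv ℝ f) x (Pi.single c 1) (Pi.single d 1) := by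
    intro c d
    show fderiv ℝ (fun y => (fderiv ℝ f y) (Pi.single d 1)) x (Pi.single c 1) = _
    rw [fderiv_clm_apply hd (differentiableAt_const _)]
    simp
  rw [key, key, hsymm]

end helpers

section per
variable {E : Type*} [NormedAddCommGroup E] [NormedSpace ℝ E]

lemma my_fderiv_per {f : (Fin 2 → ℝ) → E} {p : Fin 2 → ℝ}
    (hf : Differentiable ℝ f) (hper : ∀ x, f (x + p) = f x) (x : Fin 2 → ℝ) :
    fderiv ℝ f (x + p) = fderiv ℝ f x := by
  have h1 : (fun y => f (y + p)) = f := funext hper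
  have h3 : HasFDerivAt f (fderiv ℝ f (x + p)) x := by
    have h4 := ((hf (x + p)).hasFDerivAt.comp x ((hasFDerivAt_id x).add_const p))
    rw [ContinuousLinearMap.comp_id] at h4
    have h5 : (f ∘ fun y => id y + p) = f := by
      funext y; simpa using hper y
    rwa [h5] at h4
  rw [h3.fderiv]

lemma my_per_int {f : (Fin 2 → ℝ) → E}
    (hper : ∀ x i, f (x + Pi.single i (2 * π)) = f x) :
    ∀ (k : ℤ) (i : Fin 2) (x), f (x + Pi.single i (2 * π * k)) = f x := by
  have hneg : ∀ (x) (i : Fin 2), f (x - Pi.single i (2 * π)) = f x := by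
    intro x i
    have := hper (x - Pi.single i (2 * π)) i
    rw [sub_add_cancel] at this
    exact this.symm
  intro k
  induction k using Int.induction_on with
  | zero => intro i x; simp
  | succ n ih =>
      intro i x
      have h1 : (Pi.single i (2 * π * ((n : ℤ) + 1 : ℤ)) : Fin 2 → ℝ) =
          Pi.single i (2 * π * (n : ℤ)) + Pi.single i (2 * π) := by
        rw [← Pi.single_add]; congr 1; push_cast; ring
      rw [h1, ← add_assoc, hper, ih]
  | pred n ih =>
      intro i x
      push_cast at ih ⊢
      have h1 : (Pi.single i (2 * π * (-(n:ℝ) - 1)) : Fin 2 → ℝ) =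
          Pi.single i (2 * π * (-(n:ℝ))) - Pi.single i (2 * π) := by
        rw [← Pi.single_sub]; congr 1; ring
      rw [h1, show x + (Pi.single i (2 * π * (-(n:ℝ))) - Pi.single i (2*π))
        = (x + Pi.single i (2 * π * (-(n:ℝ)))) - Pi.single i (2*π) by abel, hneg]
      exact ih i x

lemma my_reduce {f : (Fin 2 → ℝ) → E}
    (hper : ∀ x i, f (x + Pi.single i (2 * π)) = f x) (x : Fin 2 → ℝ) :
    ∃ y ∈ Set.Icc (0 : Fin 2 → ℝ) (fun _ => 2 * π), f x = f y := by
  have h2π : (0:ℝ) < 2 * π := by positivity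
  set y : Fin 2 → ℝ := fun i => 2 * π * Int.fract (x i / (2 * π)) with hy
  have key : ∀ i : Fin 2, y i + 2 * π * (⌊x i / (2*π)⌋ : ℤ) = x i := by
    intro i
    rw [hy]
    simp only [Int.fract]
    have h2 : (2:ℝ) * π ≠ 0 := ne_of_gt h2π
    field_simp
    ring
  refine ⟨y, ⟨fun i => ?_, fun i => ?_⟩, ?_⟩
  · exact mul_nonneg h2π.le (Int.fract_nonneg _)
  · have := (Int.fract_lt_one (x i / (2 * π))).le
    calc y i = 2 * π * Int.fract (x i / (2 * π)) := rfl
    _ ≤ 2 * π * 1 := by nlinarith [Int.fract_nonneg (x i / (2*π))]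
    _ = 2 * π := by ring
  · have hx : x = y + Pi.single 0 (2 * π * (⌊x 0 / (2*π)⌋ : ℤ))
        + Pi.single 1 (2 * π * (⌊x 1 / (2*π)⌋ : ℤ)) := by
      funext i
      fin_cases i
      · have := key 0
        simp only [Pi.add_apply]
        rw [show (⟨0, by norm_num⟩ : Fin 2) = 0 from rfl,
          Pi.single_eq_same, Pi.single_eq_of_ne (by decide : (0:Fin 2) ≠ 1)]
        linarith
      · have := key 1
        simp only [Pi.add_apply]
        rw [show (⟨1, by norm_num⟩ : Fin 2) = 1 from rfl,
          Pi.single_eq_same, Pi.single_eq_of_ne (by decide : (1:Fin 2) ≠ 0)]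
        linarith
    rw [hx, my_per_int hper, my_per_int hper]
end per

lemma my_integrableOn {f : (Fin 2 → ℝ) → ℝ} (hf : Continuous f) :
    IntegrableOn f (Set.Icc (0 : Fin 2 → ℝ) (fun _ => 2 * π)) :=
  hf.continuousOn.integrableOn_compact isCompact_Icc

lemma my_insertNth_shift (i : Fin 2) (x : Fin 1 → ℝ) :
    (Fin.insertNth (α := fun _ : Fin 2 => ℝ) i (2 * π) x) =
      Fin.insertNth (α := fun _ : Fin 2 => ℝ) i 0 x + Pi.single i (2 * π) := by
  funext j
  rcases eq_or_ne j i with rfl | hj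
  · simp
  · obtain ⟨m, rfl⟩ := Fin.exists_succAbove_eq hj
    simp [Pi.single_eq_of_ne (Fin.succAbove_ne i m)]

lemma my_integral_pd_eq_zero {g : (Fin 2 → ℝ) → ℝ} (hg : ContDiff ℝ (⊤ : ℕ∞) g)
    (i : Fin 2) (hper : ∀ x, g (x + Pi.single i (2 * π)) = g x) :
    ∫ x in Set.Icc (0 : Fin 2 → ℝ) (fun _ => 2 * π), pd i g x = 0 := by
  have h2π : (0:ℝ) ≤ 2 * π := by positivity
  have hle : (0 : Fin 2 → ℝ) ≤ fun _ => 2 * π := fun _ => h2π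
  classical
  have heq : (fun x : Fin 2 → ℝ => ∑ k : Fin 2,
      (if k = i then fderiv ℝ g x else 0) (Pi.single k 1)) = fun x => pd i g x := by
    funext x
    rw [Finset.sum_eq_single i]
    · simp [pd]
    · intro k _ hk; simp [hk]
    · simp
  have key : (∫ x in Set.Icc (0 : Fin 2 → ℝ) (fun _ => 2 * π),
      ∑ k : Fin 2, (if k = i then fderiv ℝ g x else 0) (Pi.single k 1)) =
      ∑ k : Fin 2,
        ((∫ x in Set.Icc (0 : Fin 1 → ℝ) (fun _ => 2 * π),
            if k = i then g (Fin.insertNth (α := fun _ : Fin 2 => ℝ) k (2 * π) x) else (0:ℝ)) -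
          ∫ x in Set.Icc (0 : Fin 1 → ℝ) (fun _ => 2 * π),
            if k = i then g (Fin.insertNth (α := fun _ : Fin 2 => ℝ) k 0 x) else (0:ℝ)) :=
    integral_divergence_of_hasFDerivAt_off_countable' (n := 1)
      (0 : Fin 2 → ℝ) (fun _ => 2 * π) hle
      (fun k x => if k = i then g x else 0)
      (fun k x => if k = i then fderiv ℝ g x else 0)
      ∅ Set.countable_empty
      (fun k => by
        by_cases hk : k = i
        · simp only [hk, if_pos rfl]; exact hg.continuous.continuousOn
        · simp only [if_neg hk]; exact continuousOn_const)
      (fun x _ k => by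
        by_cases hk : k = i
        · simp only [hk, if_pos rfl]; exact (hg.differentiable (by simp) x).hasFDerivAt
        · simp only [if_neg hk]; exact hasFDerivAt_const (0:ℝ) x)
      (by
        rw [show (fun x : Fin 2 → ℝ => ∑ k : Fin 2,
            (if k = i then fderiv ℝ g x else 0) (Pi.single k 1)) = fun x => pd i g x from heq]
        exact my_integrableOn (my_pd_contDiff hg i).continuous)
  rw [heq] at key
  rw [key]
  apply Finset.sum_eq_zero
  intro k _
  by_cases hk : k = i
  · subst hk
    simp only [if_pos rfl]
    rw [sub_eq_zero]
    refine integral_congr_ae (Filter.Eventually.of_forall fun x => ?_)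
    simp only [if_true]
    rw [my_insertNth_shift, hper]
  · simp [hk]

lemma my_zero_of_integral_zero {h : (Fin 2 → ℝ) → ℝ} (hc : Continuous h) (hnn : ∀ x, 0 ≤ h x)
    (hint : ∫ x in Set.Icc (0 : Fin 2 → ℝ) (fun _ => 2 * π), h x = 0) :
    ∀ x ∈ Set.Icc (0 : Fin 2 → ℝ) (fun _ => 2 * π), h x = 0 := by
  set s := Set.Icc (0 : Fin 2 → ℝ) (fun _ => 2 * π) with hs
  have hmeas : volume (Function.support h ∩ s) = 0 := by
    by_contra hne
    have hpos : 0 < volume (Function.support h ∩ s) := pos_iff_ne_zero.mpr hne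
    have h2 := (setIntegral_pos_iff_support_of_nonneg_ae
      (Filter.Eventually.of_forall fun x => hnn x) (my_integrableOn hc)).mpr hpos
    rw [hint] at h2
    exact lt_irrefl 0 h2
  have hint0 : ∀ x ∈ interior s, h x = 0 := by
    intro x hx
    by_contra hhx
    have hxpos : 0 < h x := (hnn x).lt_of_ne (Ne.symm hhx)
    have hopen : IsOpen (interior s ∩ h ⁻¹' Set.Ioi 0) :=
      isOpen_interior.inter (isOpen_Ioi.preimage hc)
    have hsub : interior s ∩ h ⁻¹' Set.Ioi 0 ⊆ Function.support h ∩ s :=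
      fun y hy => ⟨ne_of_gt hy.2, interior_subset hy.1⟩
    have hvol : 0 < volume (interior s ∩ h ⁻¹' Set.Ioi 0) :=
      hopen.measure_pos volume ⟨x, hx, hxpos⟩
    exact absurd (measure_mono_null hsub hmeas) (ne_of_gt hvol)
  have hclos : closure (interior s) = s := by
    rw [hs, ← Set.pi_univ_Icc, interior_pi_set Set.finite_univ, closure_pi_set]
    simp [interior_Icc, closure_Ioo (by positivity : (0:ℝ) < 2*π).ne]
  intro x hx
  have hsubset : closure (interior s) ⊆ {y | h y = 0} :=
    closure_minimal (fun y hy => hint0 y hy) (isClosed_eq hc continuous_const)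
  exact hsubset (hclos.symm ▸ hx)

/-- Leray projection null-form identity on the torus `𝕋² = (ℝ/2πℤ)²`, stated for
`2π`-periodic smooth functions on `ℝ²`.  Here `B i = Im(φ ∂_i φ̄)`, `v` is the
mean-zero periodic solution of `Δ v = ∇ · B` (so that `𝒫 B_j = B_j - ∂_j v` is the
`j`-th component of the Leray projection of `B`), and `u` is the mean-zero periodic
solution of `Δ u = Σ_k ∂_k Im Q_{jk}(φ, φ̄)` (so that `u = Δ⁻¹ ∂^k Im Q_{jk}(φ, φ̄)`).
Then `𝒫 B_j = (2π)⁻² ∫_{𝕋²} Im(φ ∂_j φ̄) dx - Δ⁻¹ ∂^k Im Q_{jk}(φ, φ̄)`. -/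
theorem leray_nullform_identity
    (φ : (Fin 2 → ℝ) → ℂ) (hφ : ContDiff ℝ (⊤ : ℕ∞) φ)
    (hφper : ∀ (x : Fin 2 → ℝ) (i : Fin 2), φ (x + Pi.single i (2 * π)) = φ x)
    (j : Fin 2)
    (B : Fin 2 → (Fin 2 → ℝ) → ℝ)
    (hB : ∀ i x, B i x = (φ x * (starRingEnd ℂ) (pd i φ x)).im)
    (v u : (Fin 2 → ℝ) → ℝ)
    (hv : ContDiff ℝ (⊤ : ℕ∞) v) (hu : ContDiff ℝ (⊤ : ℕ∞) u)
    (hvper : ∀ x i, v (x + Pi.single i (2 * π)) = v x)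
    (huper : ∀ x i, u (x + Pi.single i (2 * π)) = u x)
    (hvlap : ∀ x, lap v x = ∑ i : Fin 2, pd i (B i) x)
    (hvmean : ∫ y in Set.Icc (0 : Fin 2 → ℝ) (fun _ => 2 * π), v y = 0)
    (hulap : ∀ x, lap u x =
      ∑ i : Fin 2, pd i (fun y =>
        (pd j φ y * (starRingEnd ℂ) (pd i φ y)
          - pd i φ y * (starRingEnd ℂ) (pd j φ y)).im) x)
    (humean : ∫ y in Set.Icc (0 : Fin 2 → ℝ) (fun _ => 2 * π), u y = 0) :
    ∀ x, B j x - pd j v x =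
      ((2 * π)⁻¹)^2 * (∫ y in Set.Icc (0 : Fin 2 → ℝ) (fun _ => 2 * π), B j y)
        - u x := by
  have hπ : (0:ℝ) < 2 * π := by positivity
  have hle : (0 : Fin 2 → ℝ) ≤ fun _ => 2 * π := fun _ => hπ.le
  set c : ℝ := ((2 * π)⁻¹)^2 *
    (∫ y in Set.Icc (0 : Fin 2 → ℝ) (fun _ => 2 * π), B j y) with hcdef
  -- smoothness
  have hφd : Differentiable ℝ φ := hφ.differentiable (by simp)
  have hφ' : ∀ i, ContDiff ℝ (⊤ : ℕ∞) (pd i φ) := fun i => my_pd_contDiff hφ i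
  have hconj : ∀ i, ContDiff ℝ (⊤ : ℕ∞) (fun x => (starRingEnd ℂ) (pd i φ x)) := fun i =>
    (Complex.conjCLE : ℂ ≃L[ℝ] ℂ).toContinuousLinearMap.contDiff.comp (hφ' i)
  have hBfun : ∀ i, B i = fun x => (φ x * (starRingEnd ℂ) (pd i φ x)).im :=
    fun i => funext (hB i)
  have hBc : ∀ i, ContDiff ℝ (⊤ : ℕ∞) (B i) := fun i => by
    rw [hBfun i]; exact Complex.imCLM.contDiff.comp (hφ.mul (hconj i))
  have hpdv : ContDiff ℝ (⊤ : ℕ∞) (pd j v) := my_pd_contDiff hv j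
  -- periodicity
  have hpdφper : ∀ (k : Fin 2) x (i : Fin 2),
      pd k φ (x + Pi.single i (2*π)) = pd k φ x := by
    intro k x i
    show fderiv ℝ φ (x + Pi.single i (2*π)) (Pi.single k 1) = _
    rw [my_fderiv_per hφd (fun y => hφper y i) x]; rfl
  have hBper : ∀ (i' : Fin 2) x (i : Fin 2),
      B i' (x + Pi.single i (2*π)) = B i' x := by
    intro i' x i; rw [hB, hB, hφper x i, hpdφper i' x i]
  have hpdvper : ∀ x (i : Fin 2), pd j v (x + Pi.single i (2*π)) = pd j v x := by
    intro x i
    show fderiv ℝ v (x + Pi.single i (2*π)) (Pi.single j 1) = _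
    rw [my_fderiv_per (hv.differentiable (by simp)) (fun y => hvper y i) x]; rfl
  -- the function w
  set w : (Fin 2 → ℝ) → ℝ := fun x => B j x - pd j v x + u x - c with hwdef
  have hwc : ContDiff ℝ (⊤ : ℕ∞) w := (((hBc j).sub hpdv).add hu).sub contDiff_const
  have hwper : ∀ x (i : Fin 2), w (x + Pi.single i (2*π)) = w x := by
    intro x i
    simp only [hwdef]
    rw [hBper j x i, hpdvper x i, huper x i]
  -- derivative of B
  have hBder : ∀ (i k : Fin 2) x, pd k (B i) x =
      (pd k φ x * (starRingEnd ℂ) (pd i φ x)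
        + φ x * (starRingEnd ℂ) (pd k (pd i φ) x)).im := by
    intro i k x
    conv_lhs => rw [hBfun i]
    rw [my_pd_im (f := fun y => φ y * (starRingEnd ℂ) (pd i φ y))
      ((hφ.mul (hconj i)).differentiable (by simp) x) k]
    rw [my_pd_mul (f := φ) (g := fun y => (starRingEnd ℂ) (pd i φ y))
      (hφd x) ((hconj i).differentiable (by simp) x) k]
    rw [my_pd_conj ((hφ' i).differentiable (by simp) x) k]
  -- antisymmetry
  have hanti : ∀ (i : Fin 2) x, pd i (B j) x - pd j (B i) x
      = -((pd j φ x * (starRingEnd ℂ) (pd i φ x)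
          - pd i φ x * (starRingEnd ℂ) (pd j φ x)).im) := by
    intro i x
    rw [hBder j i x, hBder i j x, my_pd_comm hφ i j x]
    simp only [Complex.add_im, Complex.sub_im, Complex.mul_im,
      Complex.conj_re, Complex.conj_im]
    ring
  -- pd of w
  have hpdw : ∀ (i : Fin 2) y, pd i w y = pd i (B j) y - pd i (pd j v) y + pd i u y := by
    intro i y
    rw [hwdef]
    rw [my_pd_sub (f := fun x => B j x - pd j v x + u x) (g := fun _ => c)
      ((((hBc j).sub hpdv).add hu).differentiable (by simp) y) (differentiableAt_const c) i,
      my_pd_const,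
      my_pd_add (f := fun x => B j x - pd j v x) (g := u)
        (((hBc j).sub hpdv).differentiable (by simp) y) (hu.differentiable (by simp) y) i,
      my_pd_sub (f := B j) (g := pd j v)
        ((hBc j).differentiable (by simp) y) (hpdv.differentiable (by simp) y) i]
    ring
  have hpdwf : ∀ i : Fin 2, pd i w =
      fun y => pd i (B j) y - pd i (pd j v) y + pd i u y := fun i => funext (hpdw i)
  -- Laplacian of w is zero
  have hlapw : ∀ x, lap w x = 0 := by
    intro x
    have e1 : ∀ i : Fin 2, pd i (pd i w) x
        = pd i (pd i (B j)) x - pd i (pd i (pd j v)) x + pd i (pd i u) x := by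
      intro i
      conv_lhs => rw [hpdwf i]
      rw [my_pd_add (f := fun y => pd i (B j) y - pd i (pd j v) y) (g := pd i u)
          (((my_pd_contDiff (hBc j) i).sub (my_pd_contDiff hpdv i)).differentiable (by simp) x)
          ((my_pd_contDiff hu i).differentiable (by simp) x) i,
        my_pd_sub (f := pd i (B j)) (g := pd i (pd j v))
          ((my_pd_contDiff (hBc j) i).differentiable (by simp) x)
          ((my_pd_contDiff hpdv i).differentiable (by simp) x) i]
    have e2 : ∀ i : Fin 2, pd i (pd i (pd j v)) x = pd j (pd i (pd i v)) x := by
      intro i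
      have c1 : pd i (pd j v) = pd j (pd i v) := funext (fun y => my_pd_comm hv i j y)
      rw [c1, my_pd_comm (my_pd_contDiff hv i) i j x]
    have e3 : ∑ i : Fin 2, pd j (pd i (pd i v)) x = pd j (lap v) x := by
      have : lap v = fun y => ∑ i : Fin 2, pd i (pd i v) y := rfl
      rw [this, my_pd_sum Finset.univ
        (fun k _ => ((my_pd_contDiff (my_pd_contDiff hv k) k).differentiable (by simp) x)) j]
    have e4 : pd j (lap v) x = ∑ i : Fin 2, pd i (pd j (B i)) x := by
      have hlv : lap v = fun y => ∑ i : Fin 2, pd i (B i) y := funext hvlap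
      rw [hlv, my_pd_sum Finset.univ
        (fun k _ => ((my_pd_contDiff (hBc k) k).differentiable (by simp) x)) j]
      exact Finset.sum_congr rfl fun k _ => my_pd_comm (hBc k) j k x
    have e5 : ∀ i : Fin 2, pd i (pd i (B j)) x - pd i (pd j (B i)) x
        = - pd i (fun y => (pd j φ y * (starRingEnd ℂ) (pd i φ y)
            - pd i φ y * (starRingEnd ℂ) (pd j φ y)).im) x := by
      intro i
      rw [← my_pd_sub (f := pd i (B j)) (g := pd j (B i))
        ((my_pd_contDiff (hBc j) i).differentiable (by simp) x)
        ((my_pd_contDiff (hBc i) j).differentiable (by simp) x) i]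
      rw [show (fun y => pd i (B j) y - pd j (B i) y)
          = fun y => -((pd j φ y * (starRingEnd ℂ) (pd i φ y)
            - pd i φ y * (starRingEnd ℂ) (pd j φ y)).im)
          from funext (fun y => hanti i y)]
      exact my_pd_neg i
    show ∑ i : Fin 2, pd i (pd i w) x = 0
    calc ∑ i : Fin 2, pd i (pd i w) x
        = ∑ i : Fin 2, (pd i (pd i (B j)) x - pd i (pd i (pd j v)) x + pd i (pd i u) x) :=
          Finset.sum_congr rfl fun i _ => e1 i
      _ = (∑ i : Fin 2, pd i (pd i (B j)) x) - (∑ i : Fin 2, pd i (pd i (pd j v)) x)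
            + (∑ i : Fin 2, pd i (pd i u) x) := by
          rw [Finset.sum_add_distrib, Finset.sum_sub_distrib]
      _ = (∑ i : Fin 2, pd i (pd i (B j)) x) - (∑ i : Fin 2, pd i (pd j (B i)) x)
            + lap u x := by
          rw [show ∑ i : Fin 2, pd i (pd i (pd j v)) x
              = ∑ i : Fin 2, pd j (pd i (pd i v)) x
            from Finset.sum_congr rfl fun i _ => e2 i, e3, e4]
          rfl
      _ = (∑ i : Fin 2, (pd i (pd i (B j)) x - pd i (pd j (B i)) x)) + lap u x := by
          rw [Finset.sum_sub_distrib]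
      _ = (∑ i : Fin 2, - pd i (fun y => (pd j φ y * (starRingEnd ℂ) (pd i φ y)
            - pd i φ y * (starRingEnd ℂ) (pd j φ y)).im) x) + lap u x := by
          rw [Finset.sum_congr rfl fun i _ => e5 i]
      _ = 0 := by
          rw [Finset.sum_neg_distrib, ← hulap x]
          ring
  -- energy argument
  have hpdw_per : ∀ (k : Fin 2) x (i : Fin 2),
      pd k w (x + Pi.single i (2*π)) = pd k w x := by
    intro k x i
    show fderiv ℝ w (x + Pi.single i (2*π)) (Pi.single k 1) = _
    rw [my_fderiv_per (hwc.differentiable (by simp)) (fun y => hwper y i) x]; rfl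
  have hgc : ∀ k : Fin 2, ContDiff ℝ (⊤ : ℕ∞) (fun y => w y * pd k w y) :=
    fun k => hwc.mul (my_pd_contDiff hwc k)
  have hI : ∀ k : Fin 2,
      ∫ x in Set.Icc (0 : Fin 2 → ℝ) (fun _ => 2 * π),
        pd k (fun y => w y * pd k w y) x = 0 := by
    intro k
    refine my_integral_pd_eq_zero (hgc k) k (fun x => ?_)
    rw [hwper x k, hpdw_per k x k]
  have hptwise : ∀ x, (∑ k : Fin 2, pd k (fun y => w y * pd k w y) x)
      = ∑ k : Fin 2, (pd k w x)^2 := by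
    intro x
    have e1 : ∀ k : Fin 2, pd k (fun y => w y * pd k w y) x
        = pd k w x * pd k w x + w x * pd k (pd k w) x := fun k =>
      my_pd_mul (f := w) (g := pd k w) (hwc.differentiable (by simp) x)
        ((my_pd_contDiff hwc k).differentiable (by simp) x) k
    rw [Finset.sum_congr rfl fun k _ => e1 k, Finset.sum_add_distrib, ← Finset.mul_sum]
    rw [show ∑ k : Fin 2, pd k (pd k w) x = lap w x from rfl, hlapw x]
    rw [mul_zero, add_zero]
    exact Finset.sum_congr rfl fun k _ => (sq (pd k w x)).symm
  have hintsq : ∫ x in Set.Icc (0 : Fin 2 → ℝ) (fun _ => 2 * π),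
      (∑ k : Fin 2, (pd k w x)^2) = 0 := by
    rw [show (fun x => ∑ k : Fin 2, (pd k w x)^2)
        = fun x => ∑ k : Fin 2, pd k (fun y => w y * pd k w y) x
      from funext fun x => (hptwise x).symm]
    rw [integral_finset_sum Finset.univ (fun k _ =>
      my_integrableOn (my_pd_contDiff (hgc k) k).continuous)]
    exact Finset.sum_eq_zero fun k _ => hI k
  have hsqzero : ∀ x ∈ Set.Icc (0 : Fin 2 → ℝ) (fun _ => 2 * π),
      (∑ k : Fin 2, (pd k w x)^2) = 0 := by
    refine my_zero_of_integral_zero ?_ (fun x => Finset.sum_nonneg fun k _ => sq_nonneg _)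
      hintsq
    exact continuous_finset_sum Finset.univ fun k _ =>
      ((my_pd_contDiff hwc k).continuous).pow 2
  have hpdw0box : ∀ (k : Fin 2), ∀ x ∈ Set.Icc (0 : Fin 2 → ℝ) (fun _ => 2 * π),
      pd k w x = 0 := by
    intro k x hx
    have h0 := hsqzero x hx
    rw [Fin.sum_univ_two] at h0
    have h1 : (pd 0 w x)^2 = 0 := by nlinarith [sq_nonneg (pd 0 w x), sq_nonneg (pd 1 w x)]
    have h2 : (pd 1 w x)^2 = 0 := by nlinarith [sq_nonneg (pd 0 w x), sq_nonneg (pd 1 w x)]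
    fin_cases k
    · exact pow_eq_zero_iff two_ne_zero |>.mp h1
    · exact pow_eq_zero_iff two_ne_zero |>.mp h2
  have hpdw0 : ∀ (k : Fin 2) x, pd k w x = 0 := by
    intro k x
    obtain ⟨y, hy, hxy⟩ := my_reduce (f := pd k w) (fun z i => hpdw_per k z i) x
    rw [hxy]
    exact hpdw0box k y hy
  have hwconst : ∀ x, w x = w 0 := by
    intro x
    refine is_const_of_fderiv_eq_zero (𝕜 := ℝ) (hwc.differentiable (by simp)) (fun y => ?_) x 0
    apply ContinuousLinearMap.ext
    intro vec
    have hvec : vec = vec 0 • (Pi.single 0 1 : Fin 2 → ℝ)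
        + vec 1 • (Pi.single 1 1 : Fin 2 → ℝ) := by
      funext m
      fin_cases m <;> simp [Pi.single_apply]
    rw [hvec]
    have h0 := hpdw0 0 y
    have h1 := hpdw0 1 y
    simp only [pd] at h0 h1
    simp [ContinuousLinearMap.map_add, ContinuousLinearMap.map_smul, h0, h1]
  -- mean value computation
  have hvol : (volume (Set.Icc (0 : Fin 2 → ℝ) (fun _ => 2 * π))).toReal = (2*π)^2 := by
    rw [Real.volume_Icc_pi_toReal hle]
    rw [Fin.prod_univ_two]
    simp only [Pi.zero_apply, sub_zero]
    ring
  have hIw1 : ∫ x in Set.Icc (0 : Fin 2 → ℝ) (fun _ => 2 * π), w x = (2*π)^2 * w 0 := by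
    rw [setIntegral_congr_fun measurableSet_Icc (fun y _ => hwconst y), setIntegral_const,
      measureReal_def, hvol, smul_eq_mul]
  have hIw2 : ∫ x in Set.Icc (0 : Fin 2 → ℝ) (fun _ => 2 * π), w x
      = (∫ x in Set.Icc (0 : Fin 2 → ℝ) (fun _ => 2 * π), B j x) - (2*π)^2 * c := by
    have intBj : IntegrableOn (B j) (Set.Icc (0 : Fin 2 → ℝ) (fun _ => 2 * π)) :=
      my_integrableOn (hBc j).continuous
    have intpdv : IntegrableOn (pd j v) (Set.Icc (0 : Fin 2 → ℝ) (fun _ => 2 * π)) :=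
      my_integrableOn hpdv.continuous
    have intu : IntegrableOn u (Set.Icc (0 : Fin 2 → ℝ) (fun _ => 2 * π)) :=
      my_integrableOn hu.continuous
    have intc : IntegrableOn (fun _ => c) (Set.Icc (0 : Fin 2 → ℝ) (fun _ => 2 * π)) :=
      my_integrableOn continuous_const
    have int1 : IntegrableOn (fun x => B j x - pd j v x)
        (Set.Icc (0 : Fin 2 → ℝ) (fun _ => 2 * π)) := intBj.sub intpdv
    have int2 : IntegrableOn (fun x => B j x - pd j v x + u x)
        (Set.Icc (0 : Fin 2 → ℝ) (fun _ => 2 * π)) := int1.add intu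
    rw [hwdef]
    rw [integral_sub (f := fun x => B j x - pd j v x + u x) (g := fun _ => c) int2 intc]
    rw [integral_add (f := fun x => B j x - pd j v x) (g := u) int1 intu]
    rw [integral_sub (f := B j) (g := pd j v) intBj intpdv]
    rw [humean, my_integral_pd_eq_zero hv j (fun x => hvper x j), setIntegral_const, measureReal_def, hvol,
      smul_eq_mul]
    ring
  have hw0 : w 0 = 0 := by
    have h2 : (2*π)^2 * c = ∫ x in Set.Icc (0 : Fin 2 → ℝ) (fun _ => 2 * π), B j x := by
      rw [hcdef]
      field_simp
    have := hIw1.symm.trans hIw2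
    rw [h2] at this
    have hne : ((2:ℝ)*π)^2 ≠ 0 := by positivity
    have : (2*π)^2 * w 0 = 0 := by linarith
    exact (mul_eq_zero.mp this).resolve_left hne
  intro x
  have := hwconst x
  rw [hw0] at this
  have hwx : B j x - pd j v x + u x - c = 0 := this
  rw [hcdef] at hwx
  linarith
end

section
/- Lattice point counting for spheres: for all K ≥ 1 and μ ∈ ℝ and l ∈ ℤ², the number of k ∈ ℤ² with ‖k‖ ∈ [K/2, 2K] (Euclidean norm) and | ‖k + l‖ − μ | ≤ 1 is at most C·K for some absolute constant C. -/
theorem sub_le_two_mul_sub_sqrt_sq_add_sq {x y y' : ℝ} (hxy : |x| ≤ y) (hyy' : y ≤ y') :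
    y' - y ≤ 2 * (√(x ^ 2 + y' ^ 2) - √(x ^ 2 + y ^ 2)) := by
  have hx : x ^ 2 ≤ y ^ 2 := sq_le_sq' (abs_le.mp hxy).1 (abs_le.mp hxy).2
  have hr : √(x ^ 2 + y ^ 2) ≤ 2 * y :=
    Real.sqrt_le_iff.mpr ⟨by linarith [abs_nonneg x], by nlinarith⟩
  have hr' : √(x ^ 2 + y' ^ 2) ≤ 2 * y' :=
    Real.sqrt_le_iff.mpr ⟨by linarith [abs_nonneg x], by nlinarith [abs_nonneg x]⟩
  have hmono : √(x ^ 2 + y ^ 2) ≤ √(x ^ 2 + y' ^ 2) :=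
    Real.sqrt_le_sqrt (by nlinarith [abs_nonneg x])
  have hsq : √(x ^ 2 + y' ^ 2) ^ 2 - √(x ^ 2 + y ^ 2) ^ 2 = (y' - y) * (y' + y) := by
    rw [Real.sq_sqrt (by positivity), Real.sq_sqrt (by positivity)]; ring
  nlinarith [Real.sqrt_nonneg (x ^ 2 + y ^ 2), abs_nonneg x]

theorem Int.encard_le_of_forall_sub_le {s : Set ℤ} {d : ℕ}
    (h : ∀ a ∈ s, ∀ b ∈ s, b - a ≤ d) : s.encard ≤ d + 1 := by
  rcases s.eq_empty_or_nonempty with rfl | ⟨a, ha⟩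
  · simp
  obtain ⟨m, hm, hmin⟩ :=
    Int.exists_least_of_bdd ⟨a - d, fun b hb => by linarith [h b hb a ha]⟩ ⟨a, ha⟩
  calc s.encard ≤ (Set.Icc m (m + d)).encard :=
        Set.encard_le_encard fun b hb => ⟨hmin b hb, by linarith [h m hm b hb]⟩
    _ = d + 1 := by
        rw [← Finset.coe_Icc, Set.encard_coe_eq_coe_finsetCard, Int.card_Icc]
        norm_cast; omega

theorem znorm_mk_neg (x y : ℤ) : znorm (x, -y) = znorm (x, y) := by
  simp [znorm]

theorem znorm_swap (m : ℤ × ℤ) : znorm m.swap = znorm m := by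
  simp [znorm, add_comm]

theorem abs_fst_le_znorm (k : ℤ × ℤ) : |(k.1 : ℝ)| ≤ znorm k :=
  Real.abs_le_sqrt (le_add_of_nonneg_right (sq_nonneg _))

theorem abs_snd_le_znorm (k : ℤ × ℤ) : |(k.2 : ℝ)| ≤ znorm k := by
  simpa [znorm_swap] using abs_fst_le_znorm k.swap

theorem encard_steep_half_column_le (x : ℤ) (μ : ℝ) :
    {y : ℤ | |x| ≤ y ∧ |znorm (x, y) - μ| ≤ 1}.encard ≤ 5 := by
  refine Int.encard_le_of_forall_sub_le (d := 4) fun a ⟨hxa, ha⟩ b ⟨_, hb⟩ => ?_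
  rcases le_total a b with hab | hba
  · have hgrowth := sub_le_two_mul_sub_sqrt_sq_add_sq
      (by exact_mod_cast hxa : |(x : ℝ)| ≤ a) (Int.cast_le.mpr hab)
    dsimp only [znorm] at ha hb
    have : ((b - a : ℤ) : ℝ) ≤ 4 := by push_cast; linarith [(abs_le.mp ha).1, (abs_le.mp hb).2]
    exact_mod_cast this
  · omega

theorem encard_steep_column_le (x : ℤ) (μ : ℝ) :
    {y : ℤ | |x| ≤ |y| ∧ |znorm (x, y) - μ| ≤ 1}.encard ≤ 10 := by
  set P := {y : ℤ | |x| ≤ y ∧ |znorm (x, y) - μ| ≤ 1}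
  have hsub : {y : ℤ | |x| ≤ |y| ∧ |znorm (x, y) - μ| ≤ 1} ⊆ P ∪ Neg.neg ⁻¹' P := by
    rintro y ⟨hxy, hy⟩
    rcases abs_cases y with ⟨hy', -⟩ | ⟨hy', -⟩
    · exact Or.inl ⟨hy' ▸ hxy, hy⟩
    · exact Or.inr ⟨hy' ▸ hxy, by rwa [znorm_mk_neg]⟩
  calc _ ≤ (P ∪ Neg.neg ⁻¹' P).encard := Set.encard_le_encard hsub
    _ ≤ P.encard + (Neg.neg ⁻¹' P).encard := Set.encard_union_le _ _
    _ = 2 * P.encard := by rw [Set.encard_preimage_of_bijective neg_involutive.bijective, two_mul]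
    _ ≤ 2 * 5 := by gcongr; exact encard_steep_half_column_le x μ
    _ = 10 := rfl

theorem encard_steep_le (X : Finset ℤ) (μ : ℝ) :
    {m : ℤ × ℤ | m.1 ∈ X ∧ |m.1| ≤ |m.2| ∧ |znorm m - μ| ≤ 1}.encard ≤ 10 * X.card := by
  have hsub : {m : ℤ × ℤ | m.1 ∈ X ∧ |m.1| ≤ |m.2| ∧ |znorm m - μ| ≤ 1} ⊆
      ⋃ x ∈ X, Prod.mk x '' {y : ℤ | |x| ≤ |y| ∧ |znorm (x, y) - μ| ≤ 1} :=
    fun m ⟨hX, hm⟩ => Set.mem_biUnion hX ⟨m.2, hm, rfl⟩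
  calc _ ≤ _ := Set.encard_le_encard hsub
    _ ≤ ∑ x ∈ X, (Prod.mk x '' {y : ℤ | |x| ≤ |y| ∧ |znorm (x, y) - μ| ≤ 1}).encard :=
        X.set_encard_biUnion_le _
    _ ≤ ∑ _x ∈ X, 10 := by
        gcongr with x
        rw [(Prod.mk_right_injective x).encard_image]
        exact encard_steep_column_le x μ
    _ = 10 * X.card := by rw [Finset.sum_const, nsmul_eq_mul, mul_comm]

theorem Int.natAbs_le_natFloor {z : ℤ} {r : ℝ} (h : |(z : ℝ)| ≤ r) : z.natAbs ≤ ⌊r⌋₊ :=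
  Nat.le_floor (by rwa [Nat.cast_natAbs, Int.cast_abs])

theorem encard_box_near_circle_le (c : ℤ × ℤ) (N : ℕ) (μ : ℝ) :
    {m : ℤ × ℤ | (m.1 - c.1).natAbs ≤ N ∧ (m.2 - c.2).natAbs ≤ N ∧ |znorm m - μ| ≤ 1}.encard ≤
      20 * (2 * N + 1 : ℕ) := by
  let steep (a : ℤ) :=
    {m : ℤ × ℤ | m.1 ∈ Finset.Icc (a - N) (a + N) ∧ |m.1| ≤ |m.2| ∧ |znorm m - μ| ≤ 1}
  have hsub : {m : ℤ × ℤ | (m.1 - c.1).natAbs ≤ N ∧ (m.2 - c.2).natAbs ≤ N ∧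
      |znorm m - μ| ≤ 1} ⊆ steep c.1 ∪ Prod.swap ⁻¹' steep c.2 := by
    rintro m ⟨h₁, h₂, hμ⟩
    rcases le_total |m.1| |m.2| with h | h
    · exact Or.inl ⟨Finset.mem_Icc.mpr (by omega), h, hμ⟩
    · refine Or.inr ⟨Finset.mem_Icc.mpr (by simp only [Prod.fst_swap]; omega), h, ?_⟩
      rwa [znorm_swap]
  have hsteep (a : ℤ) : (steep a).encard ≤ 10 * (2 * N + 1 : ℕ) := by
    have := encard_steep_le (Finset.Icc (a - N) (a + N)) μ
    rwa [Int.card_Icc, show (a + N + 1 - (a - N)).toNat = 2 * N + 1 by omega] at this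
  calc _ ≤ _ := Set.encard_le_encard hsub
    _ ≤ (steep c.1).encard + (steep c.2).encard := by
        rw [← Set.encard_preimage_of_bijective Prod.swap_bijective (steep c.2)]
        exact Set.encard_union_le _ _
    _ ≤ 10 * (2 * N + 1 : ℕ) + 10 * (2 * N + 1 : ℕ) := add_le_add (hsteep _) (hsteep _)
    _ = 20 * (2 * N + 1 : ℕ) := by ring

/-- Lattice point counting for spheres: there is an absolute constant `C` such
that for all `K ≥ 1`, `μ ∈ ℝ`, `l ∈ ℤ²`, the number of `k ∈ ℤ²` with
`‖k‖ ∈ [K/2, 2K]` and `|‖k + l‖ - μ| ≤ 1` is at most `C·K`. -/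
theorem lattice_point_counting_sphere :
    ∃ C > (0:ℝ), ∀ K : ℝ, 1 ≤ K → ∀ (μ : ℝ) (l : ℤ × ℤ),
      (Nat.card {k : ℤ × ℤ |
          K/2 ≤ znorm k ∧ znorm k ≤ 2*K ∧ |znorm (k + l) - μ| ≤ 1} : ℝ)
        ≤ C * K := by
  refine ⟨100, by norm_num, fun K hK μ l => ?_⟩
  set S := {k : ℤ × ℤ | K/2 ≤ znorm k ∧ znorm k ≤ 2*K ∧ |znorm (k + l) - μ| ≤ 1}
  set N := ⌊2 * K⌋₊
  have hsub : S ⊆ (· + l) ⁻¹'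
      {m | (m.1 - l.1).natAbs ≤ N ∧ (m.2 - l.2).natAbs ≤ N ∧ |znorm m - μ| ≤ 1} :=
    fun k ⟨_, hk, hμ⟩ => ⟨by simpa using Int.natAbs_le_natFloor ((abs_fst_le_znorm k).trans hk),
      by simpa using Int.natAbs_le_natFloor ((abs_snd_le_znorm k).trans hk), hμ⟩
  have hcard : Nat.card S ≤ 20 * (2 * N + 1) := by
    rw [Nat.card_coe_set_eq]
    refine (Set.encard_le_coe_iff_finite_ncard_le.mp ?_).2
    calc S.encard ≤ _ := Set.encard_le_encard hsub
      _ = _ := Set.encard_preimage_of_bijective (AddGroup.addRight_bijective l) _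
      _ ≤ _ := encard_box_near_circle_le l N μ
  have hN : (N : ℝ) ≤ 2 * K := Nat.floor_le (by linarith)
  calc (Nat.card S : ℝ) ≤ ((20 * (2 * N + 1) : ℕ) : ℝ) := by exact_mod_cast hcard
    _ ≤ 100 * K := by push_cast; linarith
end

section
/- Maxima of sub-gamma random variables: if X₁, …, X_J are random variables with sup_{p≥1} E[|X_j|^p]^{1/p} / p^{1/γ} ≤ B for all j (for some γ, B > 0), then E[max_j |X_j|^p]^{1/p} ≤ C_γ (log(2+J))^{1/γ} B p^{1/γ} for all p ≥ 1, with constant C_γ depending only on γ. -/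
open MeasureTheory Real

/-! With `q = max(p, log(2+J))`, bound the maximum by the `ℓ^q` sum:
`‖max_j |X_j|‖_q^q ≤ J (B q^{1/γ})^q`, and `J^{1/q} ≤ e` because `q ≥ log J`. Monotonicity of `L^p`
norms on a probability space brings the bound down to exponent `p`, and `q ≤ p log(2+J) / log 2`
turns `q^{1/γ}` into `(log(2+J))^{1/γ} p^{1/γ}`. -/

theorem Real.rpow_le_one_add_rpow {x p q : ℝ} (hx : 0 ≤ x) (hp : 0 ≤ p) (hpq : p ≤ q) :
    x ^ p ≤ 1 + x ^ q := by
  rcases le_total x 1 with h | h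
  · linarith [rpow_le_one hx h hp, rpow_nonneg hx q]
  · linarith [rpow_le_rpow_of_exponent_le h hpq]

theorem Real.iSup_rpow_le_sum_rpow {ι : Type*} [Fintype ι] {a : ι → ℝ} (ha : ∀ i, 0 ≤ a i)
    {q : ℝ} (hq : 0 < q) : (⨆ i, a i) ^ q ≤ ∑ i, a i ^ q := by
  cases isEmpty_or_nonempty ι
  · simp [zero_rpow hq.ne']
  · obtain ⟨i, hi⟩ := exists_eq_ciSup_of_finite (f := a)
    rw [← hi]
    exact Finset.single_le_sum (fun j _ => rpow_nonneg (ha j) q) (Finset.mem_univ i)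

theorem Real.rpow_inv_le_exp_one_of_le_exp {x q : ℝ} (hx : 0 ≤ x) (hq : 0 < q)
    (hxq : x ≤ exp q) : x ^ q⁻¹ ≤ exp 1 :=
  calc x ^ q⁻¹ ≤ exp q ^ q⁻¹ := rpow_le_rpow hx hxq (inv_nonneg.2 hq.le)
    _ = exp 1 := by rw [← exp_mul, mul_inv_cancel₀ hq.ne']

theorem Real.max_le_inv_log_two_mul {p L : ℝ} (hp : 1 ≤ p) (hL : log 2 ≤ L) :
    max p L ≤ (log 2)⁻¹ * L * p := by
  have hlog2 : 0 < log 2 := log_pos one_lt_two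
  have hlog2_le : log 2 ≤ 1 := (log_two_lt_d9.trans (by norm_num)).le
  rw [mul_assoc, inv_mul_eq_div]
  refine max_le ?_ ?_ <;> rw [le_div_iff₀ hlog2] <;> nlinarith

section Moments

variable {Ω : Type*} [MeasurableSpace Ω] {μ : Measure Ω} {p q : ℝ}

theorem MeasureTheory.Integrable.rpow_of_le [IsFiniteMeasure μ] {f : Ω → ℝ} (hf : 0 ≤ f)
    (hfm : AEStronglyMeasurable f μ) (hp : 0 ≤ p) (hpq : p ≤ q)
    (hfq : Integrable (fun ω => f ω ^ q) μ) : Integrable (fun ω => f ω ^ p) μ :=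
  ((integrable_const 1).add hfq).mono' (hfm.aemeasurable.pow_const p).aestronglyMeasurable <|
    ae_of_all _ fun ω => by
      rw [norm_of_nonneg (rpow_nonneg (hf ω) p)]
      exact rpow_le_one_add_rpow (hf ω) hp hpq

theorem MeasureTheory.integral_rpow_le_of_integral_rpow_le [IsProbabilityMeasure μ] {f : Ω → ℝ}
    (hf : 0 ≤ f) (hfm : AEStronglyMeasurable f μ) (hp : 0 < p) (hpq : p ≤ q)
    (hfq : Integrable (fun ω => f ω ^ q) μ) {M : ℝ} (hM : 0 ≤ M)
    (h : ∫ ω, f ω ^ q ∂μ ≤ M ^ q) : ∫ ω, f ω ^ p ∂μ ≤ M ^ p := by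
  have hpow : ∀ x : ℝ, 0 ≤ x → (x ^ p) ^ (q / p) = x ^ q := fun x hx => by
    rw [← rpow_mul hx, mul_div_cancel₀ _ hp.ne']
  have hqp : 0 < q / p := div_pos (hp.trans_le hpq) hp
  have jensen : (∫ ω, f ω ^ p ∂μ) ^ (q / p) ≤ ∫ ω, f ω ^ q ∂μ := by
    have := (convexOn_rpow ((one_le_div hp).2 hpq)).map_integral_le
      (continuous_rpow_const hqp.le).continuousOn isClosed_Ici
      (ae_of_all _ fun ω => rpow_nonneg (hf ω) p) (hfq.rpow_of_le hf hfm hp.le hpq)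
      (by simpa only [Function.comp_def, hpow _ (hf _)] using hfq)
    simpa only [hpow _ (hf _)] using this
  rw [← rpow_le_rpow_iff (integral_nonneg fun ω => rpow_nonneg (hf ω) p) (rpow_nonneg hM p) hqp,
    hpow M hM]
  exact jensen.trans h

variable {ι : Type*} [Fintype ι] {X : ι → Ω → ℝ}

theorem MeasureTheory.Integrable.iSup_abs_rpow (hXm : ∀ j, Measurable (X j)) (hq : 0 < q)
    (hX : ∀ j, Integrable (fun ω => |X j ω| ^ q) μ) :
    Integrable (fun ω => (⨆ j, |X j ω|) ^ q) μ :=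
  (integrable_finsetSum _ fun j _ => hX j).mono'
    ((Measurable.iSup fun j => (hXm j).abs).pow_const q).aestronglyMeasurable <|
    ae_of_all _ fun ω => by
      rw [norm_of_nonneg (rpow_nonneg (Real.iSup_nonneg fun j => abs_nonneg _) q)]
      exact iSup_rpow_le_sum_rpow (fun j => abs_nonneg (X j ω)) hq

theorem MeasureTheory.integral_iSup_abs_rpow_le (hq : 0 < q)
    (hX : ∀ j, Integrable (fun ω => |X j ω| ^ q) μ) {m : ℝ} (hm : 0 ≤ m)
    (hmom : ∀ j, ∫ ω, |X j ω| ^ q ∂μ ≤ m ^ q) :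
    ∫ ω, (⨆ j, |X j ω|) ^ q ∂μ ≤ ((Fintype.card ι : ℝ) ^ q⁻¹ * m) ^ q := by
  calc ∫ ω, (⨆ j, |X j ω|) ^ q ∂μ ≤ ∫ ω, ∑ j, |X j ω| ^ q ∂μ :=
        integral_mono_of_nonneg
          (ae_of_all _ fun ω => rpow_nonneg (Real.iSup_nonneg fun j => abs_nonneg _) q)
          (integrable_finsetSum _ fun j _ => hX j)
          (ae_of_all _ fun ω => iSup_rpow_le_sum_rpow (fun j => abs_nonneg (X j ω)) hq)
    _ = ∑ j, ∫ ω, |X j ω| ^ q ∂μ := integral_finsetSum _ fun j _ => hX j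
    _ ≤ Fintype.card ι * m ^ q := by
        simpa using Finset.sum_le_sum fun j (_ : j ∈ Finset.univ) => hmom j
    _ = ((Fintype.card ι : ℝ) ^ q⁻¹ * m) ^ q := by
        rw [mul_rpow (by positivity) hm, rpow_inv_rpow (by positivity) hq.ne']

end Moments

/-- Maxima of sub-gamma random variables: if `X₁, …, X_J` satisfy the moment bounds
`E[|X_j|^q]^{1/q} ≤ B q^{1/γ}` for all `q ≥ 1`, then
`E[(max_j |X_j|)^p]^{1/p} ≤ C_γ (log(2+J))^{1/γ} B p^{1/γ}` for all `p ≥ 1`,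
with a constant `C_γ` depending only on `γ`.  (Stated with both sides raised
to the `p`-th and `q`-th powers.) -/
theorem maxima_of_subgamma_random_variables (γ : ℝ) (hγ : 0 < γ) :
    ∃ C > (0:ℝ),
      ∀ (Ω : Type) (_ : MeasurableSpace Ω) (μ : Measure Ω)
        (_ : IsProbabilityMeasure μ)
        (J : ℕ) (X : Fin J → Ω → ℝ) (B : ℝ), 0 < B →
        (∀ j, Measurable (X j)) →
        (∀ j, ∀ q : ℝ, 1 ≤ q → Integrable (fun ω => |X j ω| ^ q) μ) →
        (∀ j, ∀ q : ℝ, 1 ≤ q → ∫ ω, |X j ω| ^ q ∂μ ≤ (B * q ^ (1/γ)) ^ q) →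
        ∀ p : ℝ, 1 ≤ p →
          ∫ ω, (⨆ j, |X j ω|) ^ p ∂μ
            ≤ (C * (Real.log (2 + J)) ^ (1/γ) * B * p ^ (1/γ)) ^ p := by
  refine ⟨exp 1 * (log 2)⁻¹ ^ (1/γ), by positivity, ?_⟩
  intro Ω _ μ _ J X B hB hXm hXint hmom p hp
  set L := log (2 + J)
  set q := max p L
  have hpq : p ≤ q := le_max_left p L
  have hq : 1 ≤ q := hp.trans hpq
  have hL : log 2 ≤ L := log_le_log two_pos (by simp)
  have hL0 : 0 < L := (log_pos one_lt_two).trans_le hL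
  have hJ : (J : ℝ) ^ q⁻¹ ≤ exp 1 := by
    refine rpow_inv_le_exp_one_of_le_exp J.cast_nonneg (by linarith) ?_
    calc (J : ℝ) ≤ exp L := by rw [exp_log (by positivity)]; linarith
      _ ≤ exp q := exp_le_exp.2 (le_max_right p L)
  have hqγ : q ^ (1/γ) ≤ (log 2)⁻¹ ^ (1/γ) * L ^ (1/γ) * p ^ (1/γ) := by
    have hlog2 : 0 ≤ (log 2)⁻¹ := inv_nonneg.2 (log_nonneg one_le_two)
    rw [← mul_rpow hlog2 hL0.le, ← mul_rpow (by positivity) (by linarith)]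
    exact rpow_le_rpow (by linarith) (max_le_inv_log_two_mul hp hL) (by positivity)
  have hmax := integral_iSup_abs_rpow_le (μ := μ) (X := X) (by linarith) (hXint · q hq)
    (by positivity) (hmom · q hq)
  rw [Fintype.card_fin] at hmax
  have hmax_p := integral_rpow_le_of_integral_rpow_le
    (fun ω => Real.iSup_nonneg fun j => abs_nonneg (X j ω))
    (Measurable.iSup fun j => (hXm j).abs).aestronglyMeasurable (by linarith) hpq
    (Integrable.iSup_abs_rpow hXm (by linarith) (hXint · q hq)) (by positivity) hmax
  refine hmax_p.trans (rpow_le_rpow (by positivity) ?_ (by linarith))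
  calc (J : ℝ) ^ q⁻¹ * (B * q ^ (1/γ))
      ≤ exp 1 * (B * ((log 2)⁻¹ ^ (1/γ) * L ^ (1/γ) * p ^ (1/γ))) := by gcongr
    _ = exp 1 * (log 2)⁻¹ ^ (1/γ) * L ^ (1/γ) * B * p ^ (1/γ) := by ring
end
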